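/- arXiv:1804.11222 — 5 statements merged into one kernel-verified Lean document; each statement's English description precedes it below -/
import Mathlib

section
/- (Invariant of the equality-elimination loop, Lemma 1.) Let θ be an open fulfilled branch of the KE^γ-tableau T_KB selected by the procedure Consistency-DL^4(φ_KB), let σ_θ be the substitution built during the execution of the equality-elimination while-loop (which repeatedly selects a literal x = y with distinct variables x, y from the set Eq_θ of equality literals on θ, sets z := min under a fixed total order of {x, y}, composes σ_θ with {x/z, y/z}, and applies σ_θ to Eq_θ), and let M = (D, M) be a 4LQS^R_DL interpretation satisfying θ. Then the condition 'Mx = M(xσ_θ) for every variable x of sort 0 occurring free in θ' holds before and after every iteration of the loop, i.e., it is an invariant of the loop; in particular it holds for the final substitution σ_θ. -/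
/-- Quantifier-free 4LQS^R_DL literals of level 0: `x = y`, `x ∈ X¹`, `⟨x,y⟩ ∈ X³`
and their negations.  Variables of each sort are coded by natural numbers. -/
inductive Lit : Type
  | eq    : ℕ → ℕ → Lit
  | neq   : ℕ → ℕ → Lit
  | mem1  : ℕ → ℕ → Lit
  | nmem1 : ℕ → ℕ → Lit
  | mem3  : ℕ → ℕ → ℕ → Lit
  | nmem3 : ℕ → ℕ → ℕ → Lit
  deriving DecidableEq

/-- The complement of a literal. -/
def Lit.compl : Lit → Lit
  | .eq x y => .neq x y
  | .neq x y => .eq x y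
  | .mem1 x X => .nmem1 x X
  | .nmem1 x X => .mem1 x X
  | .mem3 x y X => .nmem3 x y X
  | .nmem3 x y X => .mem3 x y X

/-- Applying a sort-0 variable substitution to a literal. -/
def Lit.subst0 (σ : ℕ → ℕ) : Lit → Lit
  | .eq x y => .eq (σ x) (σ y)
  | .neq x y => .neq (σ x) (σ y)
  | .mem1 x X => .mem1 (σ x) X
  | .nmem1 x X => .nmem1 (σ x) X
  | .mem3 x y X => .mem3 (σ x) (σ y) X
  | .nmem3 x y X => .nmem3 (σ x) (σ y) X

/-- The sort-0 variables occurring in a literal. -/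
def Lit.vars0 : Lit → Finset ℕ
  | .eq x y => {x, y}
  | .neq x y => {x, y}
  | .mem1 x _ => {x}
  | .nmem1 x _ => {x}
  | .mem3 x y _ => {x, y}
  | .nmem3 x y _ => {x, y}

/-- 4LQS^R_DL formulae occurring in a knowledge base: quantifier-free literals and
purely universal quantified formulae `(∀ z₁)…(∀ zₘ)(β₁ ∨ … ∨ βₙ)`, coded by a list of
quantified sort-0 variables and the list of disjuncts of the matrix. -/
inductive Fm : Type
  | lit  : Lit → Fm
  | univ : List ℕ → List Lit → Fm
  deriving DecidableEq

/-- Applying a sort-0 substitution to a formula (only free occurrences are replaced). -/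
def Fm.subst0 (σ : ℕ → ℕ) : Fm → Fm
  | .lit l => .lit (Lit.subst0 σ l)
  | .univ qs disj => .univ qs (disj.map (Lit.subst0 fun x => if x ∈ qs then x else σ x))

/-- The sort-0 variables occurring free in a formula. -/
def Fm.vars0 : Fm → Finset ℕ
  | .lit l => Lit.vars0 l
  | .univ qs disj => (disj.foldr (fun l s => Lit.vars0 l ∪ s) ∅).filter (fun x => x ∉ qs)

/-- The sort-0 variables occurring free on a branch (a list of formulae). -/
def branchVars0 (θ : List Fm) : Finset ℕ := θ.foldr (fun φ s => Fm.vars0 φ ∪ s) ∅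

/-- Kuratowski pair. -/
def kpair {D : Type} (a b : D) : Set (Set D) := {{a}, {a, b}}

/-- A 4LQS^R_DL interpretation: a nonempty domain `D` together with an assignment
sending sort-0 variables into `D`, sort-1 variables into `𝒫(D)` and sort-3 variables
into `𝒫(𝒫(𝒫(D)))`. -/
structure Interp where
  D : Type
  ne : Nonempty D
  m0 : ℕ → D
  m1 : ℕ → Set D
  m3 : ℕ → Set (Set (Set D))

/-- Satisfaction of a literal; pair terms are interpreted à la Kuratowski. -/
def Interp.satLit (M : Interp) : Lit → Prop
  | .eq x y => M.m0 x = M.m0 y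
  | .neq x y => M.m0 x ≠ M.m0 y
  | .mem1 x X => M.m0 x ∈ M.m1 X
  | .nmem1 x X => M.m0 x ∉ M.m1 X
  | .mem3 x y X => kpair (M.m0 x) (M.m0 y) ∈ M.m3 X
  | .nmem3 x y X => kpair (M.m0 x) (M.m0 y) ∉ M.m3 X

/-- Reassigning the sort-0 variables listed in `qs` according to `a`. -/
def Interp.updateOn (M : Interp) (qs : List ℕ) (a : ℕ → M.D) : Interp :=
  { M with m0 := fun x => if x ∈ qs then a x else M.m0 x }

/-- Satisfaction of a formula: purely universal formulae quantify over all
assignments of their quantified variables into the domain. -/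
def Interp.sat (M : Interp) : Fm → Prop
  | .lit l => M.satLit l
  | .univ qs disj => ∀ a : ℕ → M.D, ∃ l ∈ disj, (M.updateOn qs a).satLit l

/-- `M` satisfies a branch if it satisfies every formula occurring on it. -/
def satBranch (M : Interp) (θ : List Fm) : Prop := ∀ φ ∈ θ, M.sat φ

/-- `M` satisfies a tableau (a list of branches) if it satisfies some branch of it. -/
def satTab (M : Interp) (T : List (List Fm)) : Prop := ∃ θ ∈ T, satBranch M θ

/-- A branch is closed if it contains a formula together with its complement,
or a literal of the form `¬(x = x)`. -/
def closedBranch (θ : List Fm) : Prop :=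
  (∃ l : Lit, Fm.lit l ∈ θ ∧ Fm.lit l.compl ∈ θ) ∨ ∃ x : ℕ, Fm.lit (.neq x x) ∈ θ

/-- `τ` is an admissible instantiation of the quantified variables `qs` into the
finite set `V` of free sort-0 variables (and is the identity elsewhere). -/
def InstInto (qs : List ℕ) (V : Finset ℕ) (τ : ℕ → ℕ) : Prop :=
  (∀ x ∈ qs, τ x ∈ V) ∧ ∀ x : ℕ, x ∉ qs → τ x = x

/-- A purely universal formula `(∀ qs)(⋁ disj)` is fulfilled on `θ` (w.r.t. the
variables `V`) if for every admissible instantiation some instantiated disjunct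
occurs on `θ`. -/
def fulfilledFm (V : Finset ℕ) (θ : List Fm) (qs : List ℕ) (disj : List Lit) : Prop :=
  ∀ τ : ℕ → ℕ, InstInto qs V τ → ∃ l ∈ disj, Fm.lit (l.subst0 τ) ∈ θ

/-- A branch is fulfilled if every purely universal formula on it is fulfilled. -/
def fulfilledBranch (V : Finset ℕ) (θ : List Fm) : Prop :=
  ∀ qs disj, Fm.univ qs disj ∈ θ → fulfilledFm V θ qs disj

/-- `θ` contains no literal `x = y` with distinct variables `x`, `y`. -/
def noDistinctEq (θ : List Fm) : Prop := ∀ x y : ℕ, Fm.lit (.eq x y) ∈ θ → x = y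

/-- A branch is complete if it is closed, or it is open, fulfilled and contains no
equality literal between distinct variables. -/
def completeBranch (V : Finset ℕ) (θ : List Fm) : Prop :=
  closedBranch θ ∨ (¬ closedBranch θ ∧ fulfilledBranch V θ ∧ noDistinctEq θ)

/-- Collapsing the two variables `a`, `b` to the smaller one (w.r.t. the fixed
total order `≤` on sort-0 variables). -/
def collapse (a b : ℕ) : ℕ → ℕ := fun w => if w = a ∨ w = b then min a b else w

/-- One iteration of the equality-elimination while-loop of procedure
`Consistency-DL⁴`: a literal `x = y` of `θ` whose current `σ`-images are distinct is
selected and both images are replaced by their minimum. -/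
inductive EqStep (θ : List Fm) : (ℕ → ℕ) → (ℕ → ℕ) → Prop
  | step (σ : ℕ → ℕ) (x y : ℕ)
      (hmem : Fm.lit (.eq x y) ∈ θ) (hne : σ x ≠ σ y) :
      EqStep θ σ (fun w => collapse (σ x) (σ y) (σ w))

/-- The substitutions reachable by the equality-elimination loop, starting from the
empty substitution. -/
inductive EqReach (θ : List Fm) : (ℕ → ℕ) → Prop
  | init : EqReach θ id
  | step {σ σ' : ℕ → ℕ} : EqReach θ σ → EqStep θ σ σ' → EqReach θ σ'

lemma vars0_subset_branchVars0 {θ : List Fm} {l : Lit} (h : Fm.lit l ∈ θ) :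
    l.vars0 ⊆ branchVars0 θ := by
  induction θ with
  | nil => cases h
  | cons φ θ ih =>
    rcases List.mem_cons.mp h with h | h
    · subst h; intro v hv; exact Finset.mem_union_left _ hv
    · intro v hv; exact Finset.mem_union_right _ (ih h hv)

/-- **Lemma 1 (invariant of the equality-elimination loop).**
Let `θ` be an open fulfilled branch of the KE^γ-tableau `T_KB` selected by procedure
`Consistency-DL⁴(φ_KB)` and let `M` be a 4LQS^R_DL interpretation satisfying `θ`.
Then the condition `Mx = M(xσ_θ)`, for every sort-0 variable `x` occurring free on
`θ`, holds before and after every iteration of the equality-elimination while-loop,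
i.e. it holds for every substitution `σ` reachable by the loop (in particular for
the final substitution `σ_θ`). -/
theorem eq_loop_invariant (θ : List Fm)
    (hopen : ¬ closedBranch θ)
    (hful : fulfilledBranch (branchVars0 θ) θ)
    (M : Interp) (hM : satBranch M θ) :
    ∀ σ : ℕ → ℕ, EqReach θ σ → ∀ x ∈ branchVars0 θ, M.m0 x = M.m0 (σ x) := by
  intro σ hσ
  induction hσ with
  | init => intro x _; rfl
  | @step σ σ' _ hstep ih =>
    cases hstep with
    | step x y hmem hne =>
      have hxV : x ∈ branchVars0 θ :=
        vars0_subset_branchVars0 hmem (by simp [Lit.vars0])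
      have hyV : y ∈ branchVars0 θ :=
        vars0_subset_branchVars0 hmem (by simp [Lit.vars0])
      have hxy : M.m0 x = M.m0 y := hM _ hmem
      have hσxy : M.m0 (σ x) = M.m0 (σ y) := by
        rw [← ih x hxV, ← ih y hyV]; exact hxy
      intro w hw
      simp only [collapse]
      have key : M.m0 (σ x ⊓ σ y) = M.m0 (σ x) := by
        rcases le_total (σ x) (σ y) with hle | hle
        · rw [inf_eq_left.mpr hle]
        · rw [inf_eq_right.mpr hle]; exact hσxy.symm
      split
      · next h =>
        rw [key]
        rcases h with h | h
        · rw [← h]; exact ih w hw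
        · rw [hσxy, ← h]; exact ih w hw
      · exact ih w hw
end

section
/- (Completeness, Theorem 2.) If the KE^γ-tableau T_KB produced by the procedure Consistency-DL^4(φ_KB) is not closed, then φ_KB is satisfiable. Specifically, given an open complete branch θ' = θσ_θ of T_KB (obtained from an open fulfilled branch θ by the equality-collapsing substitution σ_θ), the canonical interpretation M_θ = (D_θ, M_θ) defined by D_θ := {xσ_θ : x ∈ Var_0(θ)}, M_θ x := xσ_θ for x ∈ Var_0(θ), M_θ X^1 := {xσ_θ : the literal x ∈ X^1 occurs in θ}, and M_θ X^3 := {⟨xσ_θ, yσ_θ⟩ : the literal ⟨x,y⟩ ∈ X^3 occurs in θ}, satisfies every formula occurring in θ, and in particular satisfies φ_KB. -/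
/-- The element of the canonical domain associated to the sort-0 variable `x`:
the variable `xσ`. -/
noncomputable def canonElem (θ : List Fm) (σ : ℕ → ℕ)
    (hne : ((branchVars0 θ).image σ).Nonempty) (x : ℕ) :
    {n : ℕ // n ∈ (branchVars0 θ).image σ} :=
  if h : σ x ∈ (branchVars0 θ).image σ then ⟨σ x, h⟩
  else ⟨Exists.choose hne, Exists.choose_spec hne⟩

/-- The canonical 4LQS^R_DL interpretation `M_θ = (D_θ, M_θ)` associated to the open
fulfilled branch `θ` and its equality-collapsing substitution `σ`:
`D_θ := {xσ : x ∈ Var₀(θ)}`, `M_θ x := xσ`,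
`M_θ X¹ := {xσ : (x ∈ X¹) occurs on θ}`, and
`M_θ X³ := {⟨xσ, yσ⟩ : (⟨x,y⟩ ∈ X³) occurs on θ}` (pairs à la Kuratowski). -/
noncomputable def canonInterp (θ : List Fm) (σ : ℕ → ℕ)
    (hne : ((branchVars0 θ).image σ).Nonempty) : Interp where
  D := {n : ℕ // n ∈ (branchVars0 θ).image σ}
  ne := ⟨⟨Exists.choose hne, Exists.choose_spec hne⟩⟩
  m0 := canonElem θ σ hne
  m1 := fun X => {a | ∃ x : ℕ, Fm.lit (.mem1 x X) ∈ θ ∧ a = canonElem θ σ hne x}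
  m3 := fun X => {s | ∃ x y : ℕ, Fm.lit (.mem3 x y X) ∈ θ ∧
      s = kpair (canonElem θ σ hne x) (canonElem θ σ hne y)}

lemma kpair_inj {D : Type} {a b c d : D} (h : kpair a b = kpair c d) :
    a = c ∧ b = d := by
  unfold kpair at h
  rw [Set.pair_eq_pair_iff] at h
  rcases h with ⟨h1, h2⟩ | ⟨h1, h2⟩
  · rw [Set.singleton_eq_singleton_iff] at h1
    subst h1
    rw [Set.pair_eq_pair_iff] at h2
    rcases h2 with ⟨-, h⟩ | ⟨h3, h4⟩
    · exact ⟨rfl, h⟩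
    · exact ⟨rfl, h4.symm ▸ h3⟩
  · have hc : c = a := by
      have : c ∈ ({a} : Set D) := h1 ▸ (by simp : c ∈ ({c, d} : Set D))
      simpa using this
    have hd : d = a := by
      have : d ∈ ({a} : Set D) := h1 ▸ (by simp : d ∈ ({c, d} : Set D))
      simpa using this
    have hb : b = c := by
      have : b ∈ ({c} : Set D) := h2 ▸ (by simp : b ∈ ({a, b} : Set D))
      simpa using this
    exact ⟨hc.symm, hb.trans (hc.trans hd.symm)⟩

lemma memBranchVars {θ : List Fm} {φ : Fm} (hφ : φ ∈ θ) {x : ℕ}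
    (hx : x ∈ φ.vars0) : x ∈ branchVars0 θ := by
  induction θ with
  | nil => cases hφ
  | cons ψ t ih =>
    rcases List.mem_cons.mp hφ with h | h
    · exact Finset.mem_union_left _ (h ▸ hx)
    · exact Finset.mem_union_right _ (ih h)

lemma canonElem_val {θ : List Fm} {σ : ℕ → ℕ}
    {hne : ((branchVars0 θ).image σ).Nonempty} {x : ℕ}
    (hx : x ∈ branchVars0 θ) : (canonElem θ σ hne x : ℕ) = σ x := by
  unfold canonElem
  rw [dif_pos (Finset.mem_image_of_mem σ hx)]

lemma canonElem_congr {θ : List Fm} {σ : ℕ → ℕ}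
    {hne : ((branchVars0 θ).image σ).Nonempty} {x y : ℕ}
    (h : σ x = σ y) : canonElem θ σ hne x = canonElem θ σ hne y := by
  unfold canonElem
  simp only [h]

lemma satLit_of_mem (θ : List Fm) (σ : ℕ → ℕ)
    (hcol : ∀ x y : ℕ, Fm.lit (.eq x y) ∈ θ → σ x = σ y)
    (hopen : ¬ closedBranch (θ.map (Fm.subst0 σ)))
    (hne : ((branchVars0 θ).image σ).Nonempty)
    (l : Lit) (hl : Fm.lit l ∈ θ) : (canonInterp θ σ hne).satLit l := by
  have hcl : ∀ l' : Lit, Fm.lit l' ∈ θ.map (Fm.subst0 σ) →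
      Fm.lit l'.compl ∈ θ.map (Fm.subst0 σ) → False :=
    fun l' h1 h2 => hopen (Or.inl ⟨l', h1, h2⟩)
  have hmap : ∀ l' : Lit, Fm.lit l' ∈ θ →
      Fm.lit (l'.subst0 σ) ∈ θ.map (Fm.subst0 σ) := by
    intro l' h
    exact List.mem_map.mpr ⟨Fm.lit l', h, rfl⟩
  cases l with
  | eq x y =>
    have h := hcol x y hl
    exact canonElem_congr h
  | neq x y =>
    have hx : x ∈ branchVars0 θ := memBranchVars hl (by simp [Fm.vars0, Lit.vars0])
    have hy : y ∈ branchVars0 θ := memBranchVars hl (by simp [Fm.vars0, Lit.vars0])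
    intro hcontra
    have hσ : σ x = σ y := by
      have := congrArg Subtype.val hcontra
      rwa [show (canonInterp θ σ hne).m0 = canonElem θ σ hne from rfl,
        canonElem_val hx, canonElem_val hy] at this
    exact hopen (Or.inr ⟨σ x, by
      have := hmap _ hl
      simpa [Lit.subst0, hσ] using this⟩)
  | mem1 x X => exact ⟨x, hl, rfl⟩
  | nmem1 x X =>
    rintro ⟨x', hx', heq⟩
    have hx : x ∈ branchVars0 θ := memBranchVars hl (by simp [Fm.vars0, Lit.vars0])
    have hx'' : x' ∈ branchVars0 θ := memBranchVars hx' (by simp [Fm.vars0, Lit.vars0])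
    have hσ : σ x = σ x' := by
      have := congrArg Subtype.val heq
      rwa [show (canonInterp θ σ hne).m0 = canonElem θ σ hne from rfl,
        canonElem_val hx, canonElem_val hx''] at this
    exact hcl (.mem1 (σ x) X)
      (by simpa [Lit.subst0, hσ] using hmap _ hx')
      (by simpa [Lit.subst0, Lit.compl] using hmap _ hl)
  | mem3 x y X => exact ⟨x, y, hl, rfl⟩
  | nmem3 x y X =>
    rintro ⟨x', y', hx', heq⟩
    obtain ⟨h1, h2⟩ := kpair_inj heq
    have hx : x ∈ branchVars0 θ := memBranchVars hl (by simp [Fm.vars0, Lit.vars0])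
    have hy : y ∈ branchVars0 θ := memBranchVars hl (by simp [Fm.vars0, Lit.vars0])
    have hx'' : x' ∈ branchVars0 θ := memBranchVars hx' (by simp [Fm.vars0, Lit.vars0])
    have hy'' : y' ∈ branchVars0 θ := memBranchVars hx' (by simp [Fm.vars0, Lit.vars0])
    have hσx : σ x = σ x' := by
      have := congrArg Subtype.val h1
      rwa [show (canonInterp θ σ hne).m0 = canonElem θ σ hne from rfl,
        canonElem_val hx, canonElem_val hx''] at this
    have hσy : σ y = σ y' := by
      have := congrArg Subtype.val h2
      rwa [show (canonInterp θ σ hne).m0 = canonElem θ σ hne from rfl,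
        canonElem_val hy, canonElem_val hy''] at this
    exact hcl (.mem3 (σ x) (σ y) X)
      (by simpa [Lit.subst0, hσx, hσy] using hmap _ hx')
      (by simpa [Lit.subst0, Lit.compl] using hmap _ hl)

/-- **Theorem 2 (completeness).**
If the KE^γ-tableau `T_KB` produced by procedure `Consistency-DL⁴(φ_KB)` is not
closed, then `φ_KB` is satisfiable.  Specifically, let `θ' = θσ_θ` be an open
complete branch of `T_KB`, obtained from an open fulfilled branch `θ` (containing
all the conjuncts `Φ` of `φ_KB`) by applying the equality-collapsing substitution
`σ_θ` produced by the equality-elimination loop. Then the canonical interpretation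
`M_θ = (D_θ, M_θ)` — with `D_θ := {xσ_θ : x ∈ Var₀(θ)}`, `M_θ x := xσ_θ`,
`M_θ X¹ := {xσ_θ : (x ∈ X¹) occurs on θ}` and
`M_θ X³ := {⟨xσ_θ, yσ_θ⟩ : (⟨x,y⟩ ∈ X³) occurs on θ}` — satisfies every formula
occurring on `θ` and, in particular, `φ_KB` is satisfiable. -/
theorem completeness (θ : List Fm) (σ : ℕ → ℕ)
    (hful : fulfilledBranch (branchVars0 θ) θ)
    (hreach : EqReach θ σ)
    (hcol : ∀ x y : ℕ, Fm.lit (.eq x y) ∈ θ → σ x = σ y)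
    (hopen : ¬ closedBranch (θ.map (Fm.subst0 σ)))
    (hne : ((branchVars0 θ).image σ).Nonempty)
    (Φ : List Fm) (hΦ : ∀ φ ∈ Φ, φ ∈ θ) :
    (∀ X ∈ θ, (canonInterp θ σ hne).sat X) ∧
    (∃ M : Interp, ∀ φ ∈ Φ, M.sat φ) := by
  have main : ∀ X ∈ θ, (canonInterp θ σ hne).sat X := by
    intro X hX
    cases X with
    | lit l => exact satLit_of_mem θ σ hcol hopen hne l hX
    | univ qs disj =>
      intro a
      have hch : ∀ x : ℕ, ∃ v : ℕ,
          (x ∈ qs → v ∈ branchVars0 θ ∧ σ v = (a x).val) ∧ (x ∉ qs → v = x) := by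
        intro x
        by_cases hx : x ∈ qs
        · obtain ⟨v, hv, hσv⟩ := Finset.mem_image.mp (a x).2
          exact ⟨v, fun _ => ⟨hv, hσv⟩, fun h => absurd hx h⟩
        · exact ⟨x, fun h => absurd h hx, fun _ => rfl⟩
      choose τ hτ using hch
      have hinst : InstInto qs (branchVars0 θ) τ :=
        ⟨fun x hx => ((hτ x).1 hx).1, fun x hx => (hτ x).2 hx⟩
      obtain ⟨l, hl, hlθ⟩ := hful qs disj hX τ hinst
      refine ⟨l, hl, ?_⟩
      have hsat := satLit_of_mem θ σ hcol hopen hne (l.subst0 τ) hlθ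
      have hm0 : ∀ x, ((canonInterp θ σ hne).updateOn qs a).m0 x =
          (canonInterp θ σ hne).m0 (τ x) := by
        intro x
        by_cases hx : x ∈ qs
        · have h1 := (hτ x).1 hx
          show (if x ∈ qs then a x else (canonInterp θ σ hne).m0 x) = _
          rw [if_pos hx]
          apply Subtype.ext
          show (a x).val = (canonElem θ σ hne (τ x) : ℕ)
          rw [canonElem_val h1.1]
          exact h1.2.symm
        · show (if x ∈ qs then a x else (canonInterp θ σ hne).m0 x) = _
          rw [if_neg hx, (hτ x).2 hx]
      have hm1 : ((canonInterp θ σ hne).updateOn qs a).m1 =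
          (canonInterp θ σ hne).m1 := rfl
      have hm3 : ((canonInterp θ σ hne).updateOn qs a).m3 =
          (canonInterp θ σ hne).m3 := rfl
      cases l <;>
        simp only [Interp.satLit, Lit.subst0, hm0, hm1, hm3] at hsat ⊢ <;>
        exact hsat
  exact ⟨main, ⟨canonInterp θ σ hne, fun φ hφ => main φ (hΦ φ hφ)⟩⟩
end

section
/- (Soundness of query answering, first half of Theorem 3.) Let Σ' be the set of substitutions returned by HOCQA-DL^4(ψ_Q, E), where ψ_Q = q_1 ∧ … ∧ q_d is a HO 4LQS^R_DL conjunctive query and E is the set of pairs (θ, σ_θ) of open fulfilled branches of T_KB with their equality-collapsing substitutions. If σ' ∈ Σ', then σ' belongs to the HO-answer set of ψ_Q with respect to φ_KB; that is, there exists a 4LQS^R_DL interpretation M with M ⊨ φ_KB ∧ ψ_Q σ'. -/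
/-- A substitution acting on variables of sorts 0, 1 and 3. -/
structure Subst where
  s0 : ℕ → ℕ
  s1 : ℕ → ℕ
  s3 : ℕ → ℕ

/-- The empty substitution. -/
def Subst.idS : Subst := ⟨id, id, id⟩

/-- Composition `a · b` of substitutions: first apply `a`, then `b`. -/
def Subst.comp (a b : Subst) : Subst :=
  ⟨fun x => b.s0 (a.s0 x), fun X => b.s1 (a.s1 X), fun X => b.s3 (a.s3 X)⟩

/-- A sort-0 substitution viewed as a three-sorted substitution. -/
def Subst.lift0 (σ : ℕ → ℕ) : Subst := ⟨σ, id, id⟩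

/-- Applying a three-sorted substitution to a literal. -/
def Lit.substF (s : Subst) : Lit → Lit
  | .eq x y => .eq (s.s0 x) (s.s0 y)
  | .neq x y => .neq (s.s0 x) (s.s0 y)
  | .mem1 x X => .mem1 (s.s0 x) (s.s1 X)
  | .nmem1 x X => .nmem1 (s.s0 x) (s.s1 X)
  | .mem3 x y X => .mem3 (s.s0 x) (s.s0 y) (s.s3 X)
  | .nmem3 x y X => .nmem3 (s.s0 x) (s.s0 y) (s.s3 X)

/-- The sort-1 variables occurring in a literal. -/
def Lit.vars1 : Lit → Finset ℕ
  | .mem1 _ X => {X}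
  | .nmem1 _ X => {X}
  | _ => ∅

/-- The sort-3 variables occurring in a literal. -/
def Lit.vars3 : Lit → Finset ℕ
  | .mem3 _ _ X => {X}
  | .nmem3 _ _ X => {X}
  | _ => ∅

/-- All the variables of `l` (sorted by sorts) lie in `V0`, `V1`, `V3`. -/
def Lit.varsIn (l : Lit) (V0 V1 V3 : Finset ℕ) : Prop :=
  Lit.vars0 l ⊆ V0 ∧ Lit.vars1 l ⊆ V1 ∧ Lit.vars3 l ⊆ V3

/-- `s` is the identity on the variables in `V0`, `V1`, `V3` (the variables of the
knowledge base, which are already ground). -/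
def Subst.Fixes (s : Subst) (V0 V1 V3 : Finset ℕ) : Prop :=
  (∀ x ∈ V0, s.s0 x = x) ∧ (∀ X ∈ V1, s.s1 X = X) ∧ (∀ X ∈ V3, s.s3 X = X)

/-- The decision tree `D_θ'` built by procedure `HOCQA-DL⁴` on the open complete
branch `θ'`: `DTree V0 V1 V3 θ' qs σ` holds iff some maximal non-failing branch of
the decision tree for the remaining query `qs` yields the accumulated substitution
`σ`.  At each node, the leftmost remaining conjunct `q` is matched against a literal
`t` occurring on `θ'` via a substitution `ρ` (with `t = qρ`), `ρ` is applied to the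
rest of the query, and the process continues. -/
inductive DTree (V0 V1 V3 : Finset ℕ) (θ' : List Fm) : List Lit → Subst → Prop
  | nil : DTree V0 V1 V3 θ' [] Subst.idS
  | cons (q : Lit) (rest : List Lit) (ρ σ : Subst)
      (hρ : ρ.Fixes V0 V1 V3)
      (hmatch : Fm.lit (Lit.substF ρ q) ∈ θ')
      (htail : DTree V0 V1 V3 θ' (rest.map (Lit.substF ρ)) σ) :
      DTree V0 V1 V3 θ' (q :: rest) (Subst.comp ρ σ)

/-- `p = (θ, σ_θ)` is one of the pairs collected in the set `E` by procedure
`Consistency-DL⁴(φ_KB)`: `θ` is an open fulfilled branch of `T_KB` containing all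
the conjuncts `Φ` of `φ_KB`, and `σ_θ` is its equality-collapsing substitution, so
that `θσ_θ` is an open complete branch of `T_KB` whose literals are ground (their
variables lie among the knowledge-base variables `V0`, `V1`, `V3`). -/
def GoodPair (V0 V1 V3 : Finset ℕ) (Φ : List Fm) (p : List Fm × (ℕ → ℕ)) : Prop :=
  (∀ φ ∈ Φ, φ ∈ p.1) ∧
  fulfilledBranch (branchVars0 p.1) p.1 ∧
  EqReach p.1 p.2 ∧
  (∀ x y : ℕ, Fm.lit (.eq x y) ∈ p.1 → p.2 x = p.2 y) ∧
  ¬ closedBranch (p.1.map (Fm.subst0 p.2)) ∧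
  ((branchVars0 p.1).image p.2).Nonempty ∧
  (∀ l : Lit, Fm.lit l ∈ p.1.map (Fm.subst0 p.2) → Lit.varsIn l V0 V1 V3)

/-- `σ'` belongs to the set `Σ'` of substitutions returned by procedure
`HOCQA-DL⁴(ψ_Q, E)`: for some pair `(θ, σ_θ) ∈ E`, some maximal non-failing branch
of the decision tree `D_{θσ_θ}` yields an accumulated substitution `σd` with
`σ' = σ_θ·σd`. -/
def InSigma (V0 V1 V3 : Finset ℕ) (ψ : List Lit)
    (E : List (List Fm × (ℕ → ℕ))) (σ' : Subst) : Prop :=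
  ∃ p ∈ E, ∃ σd : Subst, Subst.Fixes σd V0 V1 V3 ∧
    DTree V0 V1 V3 (p.1.map (Fm.subst0 p.2)) (ψ.map (Lit.substF (Subst.lift0 p.2))) σd ∧
    σ' = Subst.comp (Subst.lift0 p.2) σd

/-- `σ'` belongs to the HO-answer set of the query `ψ` with respect to the
knowledge base `Φ`: some 4LQS^R_DL interpretation satisfies `φ_KB ∧ ψ_Q σ'`. -/
def InAnswerSet (Φ : List Fm) (ψ : List Lit) (σ' : Subst) : Prop :=
  ∃ M : Interp, (∀ φ ∈ Φ, M.sat φ) ∧ ∀ q ∈ ψ, M.satLit (Lit.substF σ' q)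

/-! ### Auxiliary lemmas -/

lemma Lit.subst0_id' (l : Lit) : l.subst0 id = l := by cases l <;> rfl

lemma Lit.subst0_comp' (g h : ℕ → ℕ) (l : Lit) :
    (l.subst0 g).subst0 h = l.subst0 (fun x => h (g x)) := by cases l <;> rfl

lemma Lit.substF_comp' (a b : Subst) (l : Lit) :
    l.substF (a.comp b) = (l.substF a).substF b := by cases l <;> rfl

lemma Lit.substF_lift0' (g : ℕ → ℕ) (l : Lit) :
    l.substF (Subst.lift0 g) = l.subst0 g := by cases l <;> rfl

lemma Subst.fixes_idS (V0 V1 V3 : Finset ℕ) : Subst.idS.Fixes V0 V1 V3 :=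
  ⟨fun _ _ => rfl, fun _ _ => rfl, fun _ _ => rfl⟩

lemma Subst.fixes_comp {a b : Subst} {V0 V1 V3 : Finset ℕ}
    (ha : a.Fixes V0 V1 V3) (hb : b.Fixes V0 V1 V3) :
    (a.comp b).Fixes V0 V1 V3 := by
  refine ⟨fun x hx => ?_, fun X hX => ?_, fun X hX => ?_⟩
  · simp [Subst.comp, ha.1 x hx, hb.1 x hx]
  · simp [Subst.comp, ha.2.1 X hX, hb.2.1 X hX]
  · simp [Subst.comp, ha.2.2 X hX, hb.2.2 X hX]

lemma Lit.substF_of_fixes {s : Subst} {V0 V1 V3 : Finset ℕ} {l : Lit}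
    (hs : s.Fixes V0 V1 V3) (hl : l.varsIn V0 V1 V3) : l.substF s = l := by
  obtain ⟨h0, h1, h3⟩ := hs
  obtain ⟨v0, v1, v3⟩ := hl
  cases l with
  | eq x y =>
      simp only [Lit.substF]
      rw [h0 x (v0 (by simp [Lit.vars0])), h0 y (v0 (by simp [Lit.vars0]))]
  | neq x y =>
      simp only [Lit.substF]
      rw [h0 x (v0 (by simp [Lit.vars0])), h0 y (v0 (by simp [Lit.vars0]))]
  | mem1 x X =>
      simp only [Lit.substF]
      rw [h0 x (v0 (by simp [Lit.vars0])), h1 X (v1 (by simp [Lit.vars1]))]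
  | nmem1 x X =>
      simp only [Lit.substF]
      rw [h0 x (v0 (by simp [Lit.vars0])), h1 X (v1 (by simp [Lit.vars1]))]
  | mem3 x y X =>
      simp only [Lit.substF]
      rw [h0 x (v0 (by simp [Lit.vars0])), h0 y (v0 (by simp [Lit.vars0])),
        h3 X (v3 (by simp [Lit.vars3]))]
  | nmem3 x y X =>
      simp only [Lit.substF]
      rw [h0 x (v0 (by simp [Lit.vars0])), h0 y (v0 (by simp [Lit.vars0])),
        h3 X (v3 (by simp [Lit.vars3]))]

lemma dtree_sound {V0 V1 V3 : Finset ℕ} {θ' : List Fm}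
    (hvars : ∀ l : Lit, Fm.lit l ∈ θ' → l.varsIn V0 V1 V3) :
    ∀ {qs : List Lit} {σ : Subst}, DTree V0 V1 V3 θ' qs σ →
      σ.Fixes V0 V1 V3 ∧ ∀ q ∈ qs, Fm.lit (q.substF σ) ∈ θ' := by
  intro qs σ h
  induction h with
  | nil => exact ⟨Subst.fixes_idS V0 V1 V3, by simp⟩
  | cons q rest ρ σ hρ hmatch htail ih =>
      refine ⟨Subst.fixes_comp hρ ih.1, ?_⟩
      intro q' hq'
      rcases List.mem_cons.mp hq' with rfl | hmem
      · rw [Lit.substF_comp', Lit.substF_of_fixes ih.1 (hvars _ hmatch)]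
        exact hmatch
      · have := ih.2 (q'.substF ρ) (List.mem_map_of_mem hmem)
        rw [Lit.substF_comp']
        exact this

lemma eqReach_idem {θ : List Fm} {σt : ℕ → ℕ} (h : EqReach θ σt) :
    ∀ w, σt (σt w) = σt w := by
  induction h with
  | init => intro w; rfl
  | step hr st ih =>
      cases st with
      | step x y hmem hne =>
          rename_i σ
          intro w
          simp only [collapse]
          by_cases hw : σ w = σ x ∨ σ w = σ y
          · simp only [if_pos hw]
            rcases le_total (σ x) (σ y) with hle | hle
            · simp [min_eq_left hle, ih x]
            · simp [min_eq_right hle, ih y]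
          · simp only [if_neg hw, ih w]

lemma mem_branchVars0 {φ : Fm} {θ : List Fm} (h : φ ∈ θ) :
    Fm.vars0 φ ⊆ branchVars0 θ := by
  induction θ with
  | nil => cases h
  | cons a t ih =>
      rcases List.mem_cons.mp h with rfl | h
      · exact Finset.subset_union_left
      · exact (ih h).trans Finset.subset_union_right

lemma mem_foldrVars {l : Lit} {disj : List Lit} (h : l ∈ disj) :
    Lit.vars0 l ⊆ disj.foldr (fun l s => Lit.vars0 l ∪ s) ∅ := by
  induction disj with
  | nil => cases h
  | cons a t ih =>
      rcases List.mem_cons.mp h with rfl | h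
      · exact Finset.subset_union_left
      · exact (ih h).trans Finset.subset_union_right

lemma vars0_subst0_subset (g : ℕ → ℕ) (l : Lit) :
    Lit.vars0 (l.subst0 g) ⊆ (Lit.vars0 l).image g := by
  cases l <;> simp [Lit.subst0, Lit.vars0, Finset.image_insert, Finset.insert_subset_iff]

lemma lit_mem_map_subst0 {l : Lit} {θ : List Fm} {σ : ℕ → ℕ}
    (h : Fm.lit l ∈ θ.map (Fm.subst0 σ)) :
    ∃ l₀ : Lit, Fm.lit l₀ ∈ θ ∧ l = l₀.subst0 σ := by
  rcases List.mem_map.mp h with ⟨φ, hφ, hφeq⟩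
  cases φ with
  | lit l₀ =>
      refine ⟨l₀, hφ, ?_⟩
      simpa [Fm.subst0] using hφeq.symm
  | univ qs disj => simp [Fm.subst0] at hφeq

/-! ### The canonical model built from an open complete branch -/

def Dom (S : Finset ℕ) : Type := {d : ℕ // d ∈ S}

def mkI (S : Finset ℕ) (hne : S.Nonempty) (f : ℕ → Dom S) (θ' : List Fm) : Interp where
  D := Dom S
  ne := ⟨⟨hne.choose, hne.choose_spec⟩⟩
  m0 := f
  m1 := fun X => {d : Dom S | Fm.lit (.mem1 d.1 X) ∈ θ'}
  m3 := fun X => {s : Set (Set (Dom S)) |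
      ∃ a b : Dom S, s = kpair a b ∧ Fm.lit (.mem3 a.1 b.1 X) ∈ θ'}

lemma satLit_mk {S : Finset ℕ} (hne : S.Nonempty) (f : ℕ → Dom S) {θ' : List Fm}
    (hopen : ¬ closedBranch θ')
    (hrefl : ∀ u v : ℕ, Fm.lit (.eq u v) ∈ θ' → u = v)
    (l : Lit) (g : ℕ → ℕ)
    (h1 : ∀ x ∈ l.vars0, (f x).1 = g x)
    (h2 : Fm.lit (l.subst0 g) ∈ θ') :
    (mkI S hne f θ').satLit l := by
  cases l with
  | eq x y =>
      have hx : (f x).1 = g x := h1 x (by simp [Lit.vars0])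
      have hy : (f y).1 = g y := h1 y (by simp [Lit.vars0])
      have : g x = g y := hrefl _ _ h2
      show f x = f y
      exact Subtype.ext (by rw [hx, hy, this])
  | neq x y =>
      have hx : (f x).1 = g x := h1 x (by simp [Lit.vars0])
      have hy : (f y).1 = g y := h1 y (by simp [Lit.vars0])
      show f x ≠ f y
      intro hxy
      have : g x = g y := by rw [← hx, ← hy, hxy]
      apply hopen
      right
      refine ⟨g x, ?_⟩
      simp only [Lit.subst0] at h2
      rwa [← this] at h2
  | mem1 x X =>
      have hx : (f x).1 = g x := h1 x (by simp [Lit.vars0])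
      show Fm.lit (.mem1 (f x).1 X) ∈ θ'
      rw [hx]; exact h2
  | nmem1 x X =>
      have hx : (f x).1 = g x := h1 x (by simp [Lit.vars0])
      show Fm.lit (.mem1 (f x).1 X) ∉ θ'
      rw [hx]
      intro hmem
      exact hopen (Or.inl ⟨.mem1 (g x) X, hmem, h2⟩)
  | mem3 x y X =>
      have hx : (f x).1 = g x := h1 x (by simp [Lit.vars0])
      have hy : (f y).1 = g y := h1 y (by simp [Lit.vars0])
      show kpair (f x) (f y) ∈ _
      exact ⟨f x, f y, rfl, by rw [hx, hy]; exact h2⟩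
  | nmem3 x y X =>
      have hx : (f x).1 = g x := h1 x (by simp [Lit.vars0])
      have hy : (f y).1 = g y := h1 y (by simp [Lit.vars0])
      show kpair (f x) (f y) ∉ _
      rintro ⟨a, b, hab, hmem⟩
      obtain ⟨ha, hb⟩ := kpair_inj hab
      rw [← ha, ← hb, hx, hy] at hmem
      exact hopen (Or.inl ⟨.mem3 (g x) (g y) X, hmem, h2⟩)
/-- **Theorem 3, first half (soundness of query answering).**
Let `Σ'` be the set of substitutions returned by `HOCQA-DL⁴(ψ_Q, E)`, where
`ψ_Q = q₁ ∧ … ∧ q_d` is a HO 4LQS^R_DL conjunctive query and `E` is the set of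
pairs `(θ, σ_θ)` of open fulfilled branches of `T_KB` together with their
equality-collapsing substitutions.  If `σ' ∈ Σ'`, then `σ'` belongs to the
HO-answer set of `ψ_Q` with respect to `φ_KB`: there exists a 4LQS^R_DL
interpretation `M` with `M ⊨ φ_KB ∧ ψ_Q σ'`. -/
theorem hocqa_sound (V0 V1 V3 : Finset ℕ) (Φ : List Fm) (ψ : List Lit)
    (E : List (List Fm × (ℕ → ℕ)))
    (hE : ∀ p ∈ E, GoodPair V0 V1 V3 Φ p)
    (σ' : Subst)
    (hσ' : InSigma V0 V1 V3 ψ E σ') :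
    InAnswerSet Φ ψ σ' := by
  obtain ⟨p, hpE, σd, hσdfix, hdt, hσ'eq⟩ := hσ'
  obtain ⟨hΦ, hful, hreach, heqs, hopen, hSne, hvars⟩ := hE p hpE
  obtain ⟨θ, σθ⟩ := p
  simp only at hΦ hful hreach heqs hopen hSne hvars hdt hσ'eq
  set θ' : List Fm := θ.map (Fm.subst0 σθ) with hθ'
  set S : Finset ℕ := (branchVars0 θ).image σθ with hS
  have hidem : ∀ w, σθ (σθ w) = σθ w := eqReach_idem hreach
  have hSfix : ∀ d ∈ S, σθ d = d := by
    intro d hd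
    obtain ⟨v, hv, rfl⟩ := Finset.mem_image.mp hd
    exact hidem v
  have hrefl : ∀ u v : ℕ, Fm.lit (.eq u v) ∈ θ' → u = v := by
    intro u v h
    obtain ⟨l₀, hl₀, heq'⟩ := lit_mem_map_subst0 h
    cases l₀ with
    | eq x y =>
        simp only [Lit.subst0, Lit.eq.injEq] at heq'
        rw [heq'.1, heq'.2]
        exact heqs x y hl₀
    | neq x y => simp [Lit.subst0] at heq'
    | mem1 x X => simp [Lit.subst0] at heq'
    | nmem1 x X => simp [Lit.subst0] at heq'
    | mem3 x y X => simp [Lit.subst0] at heq'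
    | nmem3 x y X => simp [Lit.subst0] at heq'
  have hlitS : ∀ l : Lit, Fm.lit l ∈ θ' → l.vars0 ⊆ S := by
    intro l hl
    obtain ⟨l₀, hl₀, rfl⟩ := lit_mem_map_subst0 hl
    refine (vars0_subst0_subset σθ l₀).trans (Finset.image_subset_image ?_)
    exact mem_branchVars0 hl₀
  let f : ℕ → Dom S := fun x =>
    if h : σθ x ∈ S then ⟨σθ x, h⟩ else ⟨hSne.choose, hSne.choose_spec⟩
  have hfval : ∀ x, σθ x ∈ S → (f x).1 = σθ x := by
    intro x hx
    simp only [f]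
    exact congrArg Subtype.val (dif_pos hx)
  refine ⟨mkI S hSne f θ', ?_, ?_⟩
  · -- the model satisfies the knowledge base
    intro φ hφΦ
    have hφθ : φ ∈ θ := hΦ φ hφΦ
    cases φ with
    | lit l =>
        show (mkI S hSne f θ').satLit l
        refine satLit_mk hSne f hopen hrefl l σθ ?_ ?_
        · intro x hx
          exact hfval x (Finset.mem_image_of_mem σθ (mem_branchVars0 hφθ hx))
        · exact List.mem_map_of_mem (f := Fm.subst0 σθ) hφθ
    | univ qs disj =>
        intro a
        have hch : ∀ x : ℕ, ∃ v ∈ branchVars0 θ, σθ v = (a x).1 := fun x =>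
          Finset.mem_image.mp (a x).2
        choose vfun hvmem hvval using hch
        obtain ⟨l, hldisj, hlmem⟩ :=
          hful qs disj hφθ (fun x => if x ∈ qs then vfun x else x)
            ⟨fun x hx => by simpa [hx] using hvmem x, fun x hx => if_neg hx⟩
        have h2 : Fm.lit (l.subst0
            (fun x => σθ (if x ∈ qs then vfun x else x))) ∈ θ' := by
          have := List.mem_map_of_mem (f := Fm.subst0 σθ) hlmem
          rw [← Lit.subst0_comp']
          exact this
        have h1 : ∀ x ∈ l.vars0,
            ((fun x => if x ∈ qs then a x else f x) x).1
              = σθ (if x ∈ qs then vfun x else x) := by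
          intro x hx
          by_cases hq : x ∈ qs
          · simp only [if_pos hq]
            exact (congrArg Subtype.val (if_pos hq)).trans (hvval x).symm
          · simp only [if_neg hq]
            refine (congrArg Subtype.val (if_neg hq)).trans <| hfval x (Finset.mem_image_of_mem σθ (mem_branchVars0 hφθ ?_))
            simp only [Fm.vars0, Finset.mem_filter]
            exact ⟨mem_foldrVars hldisj hx, hq⟩
        exact ⟨l, hldisj, satLit_mk hSne _ hopen hrefl l _ h1 h2⟩
  · -- the model satisfies the substituted query
    intro q hq
    have hd := (dtree_sound hvars hdt).2 (q.substF (Subst.lift0 σθ))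
      (List.mem_map_of_mem hq)
    rw [← Lit.substF_comp'] at hd
    rw [hσ'eq]
    refine satLit_mk hSne f hopen hrefl _ id ?_ ?_
    · intro x hx
      have hxS : x ∈ S := hlitS _ hd hx
      have hσx : σθ x = x := hSfix x hxS
      have := hfval x (by rw [hσx]; exact hxS)
      rw [this, hσx]
      rfl
    · rw [Lit.subst0_id']
      exact hd
end

section
/- (Height bound for the tableau of a single universal formula.) Let ψ be a purely universal quantified formula of 4LQS^R_DL with at most r universal quantifiers and at most ℓ literals in its matrix, and let k = |Var_0(Φ_KB)| be the number of free sort-0 variables of the knowledge-base formula set. Then the set Σ^KB_ψ of instantiating substitutions has cardinality k^r, and processing ψ in procedure Consistency-DL^4 applies at most ℓ−1 PB-rule applications and one E^γ-rule application per substitution, so ψ generates a KE^γ-tableau of height O(ℓ·k^r). -/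
/-- The steps performed by procedure `Consistency-DL⁴` while processing the single
purely universal quantified formula `ψ = (∀ qs)(⋁ disj)`: for each admissible
instantiation `τ` of its quantified variables none of whose disjunct-instances is
already on the branch, at most `ℓ − 1` applications of the `PB`-rule (each splitting
on a missing complement of an instantiated disjunct, while the `E^γ`-rule is not yet
applicable) followed by one application of the `E^γ`-rule. -/
inductive ProcStepOn (V : Finset ℕ) (qs : List ℕ) (disj : List Lit) :
    List (List Fm) → List (List Fm) → Prop
  | egamma (L R : List (List Fm)) (θ : List Fm)
      (τ : ℕ → ℕ) (i : Fin disj.length)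
      (hψ : Fm.univ qs disj ∈ θ) (hτ : InstInto qs V τ)
      (hnone : ∀ j : Fin disj.length, Fm.lit (Lit.subst0 τ (disj.get j)) ∉ θ)
      (hcompl : ∀ j : Fin disj.length, j ≠ i →
        Fm.lit (Lit.subst0 τ (Lit.compl (disj.get j))) ∈ θ) :
      ProcStepOn V qs disj (L ++ θ :: R)
        (L ++ (θ ++ [Fm.lit (Lit.subst0 τ (disj.get i))]) :: R)
  | pb (L R : List (List Fm)) (θ : List Fm)
      (τ : ℕ → ℕ) (h : Fin disj.length)
      (hψ : Fm.univ qs disj ∈ θ) (hτ : InstInto qs V τ)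
      (hnone : ∀ j : Fin disj.length, Fm.lit (Lit.subst0 τ (disj.get j)) ∉ θ)
      (hmiss : Fm.lit (Lit.subst0 τ (Lit.compl (disj.get h))) ∉ θ)
      (hnoE : ¬ ∃ i : Fin disj.length, ∀ j : Fin disj.length, j ≠ i →
        Fm.lit (Lit.subst0 τ (Lit.compl (disj.get j))) ∈ θ) :
      ProcStepOn V qs disj (L ++ θ :: R)
        (L ++ (θ ++ [Fm.lit (Lit.subst0 τ (Lit.compl (disj.get h)))]) ::
          (θ ++ [Fm.lit (Lit.subst0 τ (disj.get h))]) :: R)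


/-- Auxiliary: the equivalence between admissible instantiations and functions
from the quantified variables into `V`. -/
def instEquiv (qs : List ℕ) (V : Finset ℕ) :
    {τ : ℕ → ℕ // InstInto qs V τ} ≃ ({x // x ∈ qs.toFinset} → {v // v ∈ V}) where
  toFun τ := fun x => ⟨τ.1 x.1, τ.2.1 x.1 (List.mem_toFinset.1 x.2)⟩
  invFun g := ⟨fun x => if h : x ∈ qs.toFinset then (g ⟨x, h⟩).1 else x,
    fun x hx => by
      have h : x ∈ qs.toFinset := List.mem_toFinset.2 hx
      simp only [dif_pos h]; exact (g ⟨x, h⟩).2,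
    fun x hx => by
      have h : x ∉ qs.toFinset := fun h => hx (List.mem_toFinset.1 h)
      simp only [dif_neg h]⟩
  left_inv τ := by
    apply Subtype.ext; funext x
    by_cases h : x ∈ qs.toFinset
    · simp [h]
    · simp only [dif_neg h]
      exact (τ.2.2 x (fun hx => h (List.mem_toFinset.2 hx))).symm
  right_inv g := by
    funext x
    apply Subtype.ext
    simp [x.2]

open Classical in
/-- The weight of a branch `θ` w.r.t. a substitution `τ`: number of processing
steps with `τ` already "used up" on `θ`. -/
noncomputable def wgt (disj : List Lit) (θ : List Fm) (τ : ℕ → ℕ) : ℕ :=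
  if ∃ j : Fin disj.length, Fm.lit (Lit.subst0 τ (disj.get j)) ∈ θ then disj.length
  else min (Finset.univ.filter fun j : Fin disj.length =>
      Fm.lit (Lit.subst0 τ (Lit.compl (disj.get j))) ∈ θ).card (disj.length - 1)

lemma wgt_le (disj : List Lit) (θ : List Fm) (τ : ℕ → ℕ) :
    wgt disj θ τ ≤ disj.length := by
  unfold wgt; split_ifs
  · exact le_rfl
  · exact le_trans (min_le_right _ _) (Nat.sub_le _ _)

lemma wgt_mono (disj : List Lit) {θ θ' : List Fm} (τ : ℕ → ℕ)
    (hsub : ∀ f, f ∈ θ → f ∈ θ') : wgt disj θ τ ≤ wgt disj θ' τ := by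
  unfold wgt; split_ifs with h1 h2 h2
  · exact le_rfl
  · obtain ⟨j, hj⟩ := h1; exact absurd ⟨j, hsub _ hj⟩ h2
  · exact le_trans (min_le_right _ _) (Nat.sub_le _ _)
  · refine min_le_min ?_ le_rfl
    apply Finset.card_le_card
    intro j hj
    simp only [Finset.mem_filter] at hj ⊢
    exact ⟨hj.1, hsub _ hj.2⟩

lemma wgt_lt_of_add_direct (disj : List Lit) (θ : List Fm) (τ : ℕ → ℕ)
    (i : Fin disj.length)
    (hnone : ∀ j : Fin disj.length, Fm.lit (Lit.subst0 τ (disj.get j)) ∉ θ) :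
    wgt disj θ τ < wgt disj (θ ++ [Fm.lit (Lit.subst0 τ (disj.get i))]) τ := by
  have hafter : ∃ j : Fin disj.length,
      Fm.lit (Lit.subst0 τ (disj.get j)) ∈ θ ++ [Fm.lit (Lit.subst0 τ (disj.get i))] :=
    ⟨i, by simp⟩
  have hbefore : ¬ ∃ j : Fin disj.length, Fm.lit (Lit.subst0 τ (disj.get j)) ∈ θ := by
    rintro ⟨j, hj⟩; exact hnone j hj
  unfold wgt
  rw [if_neg hbefore, if_pos hafter]
  have := min_le_right (Finset.univ.filter fun j : Fin disj.length =>
      Fm.lit (Lit.subst0 τ (Lit.compl (disj.get j))) ∈ θ).card (disj.length - 1)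
  have hpos : 0 < disj.length := i.pos
  omega

lemma wgt_lt_of_add_compl (disj : List Lit) (θ : List Fm) (τ : ℕ → ℕ)
    (h : Fin disj.length)
    (hnone : ∀ j : Fin disj.length, Fm.lit (Lit.subst0 τ (disj.get j)) ∉ θ)
    (hmiss : Fm.lit (Lit.subst0 τ (Lit.compl (disj.get h))) ∉ θ)
    (hnoE : ¬ ∃ i : Fin disj.length, ∀ j : Fin disj.length, j ≠ i →
        Fm.lit (Lit.subst0 τ (Lit.compl (disj.get j))) ∈ θ) :
    wgt disj θ τ <
      wgt disj (θ ++ [Fm.lit (Lit.subst0 τ (Lit.compl (disj.get h)))]) τ := by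
  classical
  push_neg at hnoE
  obtain ⟨j, hjh, hjm⟩ := hnoE h
  set P : Fin disj.length → Prop :=
    fun i => Fm.lit (Lit.subst0 τ (Lit.compl (disj.get i))) ∈ θ with hP
  set c := (Finset.univ.filter P).card with hc
  -- two uncovered indices: h and j
  have hcard2 : ({h, j} : Finset (Fin disj.length)).card = 2 := by
    rw [Finset.card_insert_of_notMem (by simp [Ne.symm hjh]), Finset.card_singleton]
  have hsub : ({h, j} : Finset (Fin disj.length)) ⊆ Finset.univ.filter (fun i => ¬ P i) := by
    intro x hx
    simp only [Finset.mem_insert, Finset.mem_singleton] at hx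
    rcases hx with rfl | rfl
    · simp only [Finset.mem_filter, Finset.mem_univ, true_and, hP]
      exact hmiss
    · simp only [Finset.mem_filter, Finset.mem_univ, true_and, hP]
      exact hjm
  have hsplit := Finset.card_filter_add_card_filter_not (s := Finset.univ) (p := P)
  rw [Finset.card_univ, Fintype.card_fin] at hsplit
  have h2 : 2 ≤ (Finset.univ.filter (fun i => ¬ P i)).card :=
    hcard2 ▸ Finset.card_le_card hsub
  have hcle : c + 2 ≤ disj.length := by omega
  have hbefore : ¬ ∃ i : Fin disj.length, Fm.lit (Lit.subst0 τ (disj.get i)) ∈ θ := by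
    rintro ⟨i, hi⟩; exact hnone i hi
  -- the covered set grows strictly
  have hcov : c + 1 ≤ (Finset.univ.filter fun i : Fin disj.length =>
      Fm.lit (Lit.subst0 τ (Lit.compl (disj.get i))) ∈
        θ ++ [Fm.lit (Lit.subst0 τ (Lit.compl (disj.get h)))]).card := by
    have hins : insert h (Finset.univ.filter P) ⊆
        Finset.univ.filter fun i : Fin disj.length =>
          Fm.lit (Lit.subst0 τ (Lit.compl (disj.get i))) ∈
            θ ++ [Fm.lit (Lit.subst0 τ (Lit.compl (disj.get h)))] := by
      intro x hx
      simp only [Finset.mem_insert, Finset.mem_filter, Finset.mem_univ, true_and,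
        List.mem_append, List.mem_singleton, hP] at hx ⊢
      rcases hx with rfl | hx
      · right; rfl
      · left; exact hx
    have hhnot : h ∉ Finset.univ.filter P := by
      simp only [Finset.mem_filter, Finset.mem_univ, true_and, hP]
      exact hmiss
    calc c + 1 = (insert h (Finset.univ.filter P)).card := by
          rw [Finset.card_insert_of_notMem hhnot]
      _ ≤ _ := Finset.card_le_card hins
  unfold wgt
  rw [if_neg hbefore]
  have hlhs : (Finset.univ.filter fun j : Fin disj.length =>
      Fm.lit (Lit.subst0 τ (Lit.compl (disj.get j))) ∈ θ).card = c := rfl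
  rw [hlhs]
  have hm := min_le_left c (disj.length - 1)
  split_ifs with hdir
  · omega
  · refine lt_min ?_ ?_
    · omega
    · omega

lemma sum_wgt_succ_le {Sfin : Finset (ℕ → ℕ)} (disj : List Lit) (θ : List Fm)
    (f : Fm) (τ : ℕ → ℕ) (hτ : τ ∈ Sfin)
    (hlt : wgt disj θ τ < wgt disj (θ ++ [f]) τ) :
    (∑ σ ∈ Sfin, wgt disj θ σ) + 1 ≤ ∑ σ ∈ Sfin, wgt disj (θ ++ [f]) σ := by
  have h2 : (∑ σ ∈ Sfin, wgt disj θ σ) < ∑ σ ∈ Sfin, wgt disj (θ ++ [f]) σ :=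
    Finset.sum_lt_sum (fun σ _ => wgt_mono disj σ (fun g hg => by simp [hg])) ⟨τ, hτ, hlt⟩
  omega

/-- **Height bound for the tableau generated by a single universal formula.**
Let `ψ = (∀ qs)(⋁ disj)` be a purely universal quantified formula of 4LQS^R_DL with
`r = qs.length` (pairwise distinct) universal quantifiers and `ℓ = disj.length`
literals in its matrix, and let `k = |V|` be the number of free sort-0 variables of
the knowledge base.  Then:
(i) the set `Σ^KB_ψ` of admissible instantiating substitutions has cardinality
`k ^ r`; and
(ii) processing `ψ` in procedure `Consistency-DL⁴` applies, per substitution, at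
most `ℓ − 1` `PB`-rule applications and one `E^γ`-rule application, each extending a
branch by one formula, so `ψ` generates a KE^γ-tableau of height `O(ℓ·k^r)`: every
branch of every tableau so obtained from the one-branch tableau `[θ₀]` has length
at most `θ₀.length + ℓ·k^r`. -/
theorem single_formula_bounds (V : Finset ℕ) (qs : List ℕ) (disj : List Lit)
    (hnd : qs.Nodup) :
    ({τ : ℕ → ℕ | InstInto qs V τ}.ncard = V.card ^ qs.length) ∧
    (∀ (θ₀ : List Fm) (T : List (List Fm)),
      Relation.ReflTransGen (ProcStepOn V qs disj) [θ₀] T →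
      ∀ θ ∈ T, θ.length ≤ θ₀.length + disj.length * V.card ^ qs.length) := by
  classical
  -- Part (i)
  have hfin : ({τ : ℕ → ℕ | InstInto qs V τ}).Finite := by
    rw [Set.finite_coe_iff.symm]
    exact Finite.of_equiv _ (instEquiv qs V).symm
  have hncard : ({τ : ℕ → ℕ | InstInto qs V τ}).ncard = V.card ^ qs.length := by
    have e : {τ : ℕ → ℕ | InstInto qs V τ} ≃ ({x // x ∈ qs.toFinset} → {v // v ∈ V}) :=
      instEquiv qs V
    rw [← Nat.card_coe_set_eq, Nat.card_congr e, Nat.card_eq_fintype_card,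
      Fintype.card_fun, Fintype.card_coe, Fintype.card_coe,
      List.toFinset_card_of_nodup hnd]
  refine ⟨hncard, ?_⟩
  set Sfin := hfin.toFinset with hS
  have hScard : Sfin.card = V.card ^ qs.length := by
    rw [← hncard, hS, Set.ncard_eq_toFinset_card _ hfin]
  intro θ₀ T hT θ hθ
  -- the invariant
  have key : ∀ T, Relation.ReflTransGen (ProcStepOn V qs disj) [θ₀] T →
      ∀ θ ∈ T, θ.length ≤ θ₀.length + ∑ σ ∈ Sfin, wgt disj θ σ := by
    intro T hT
    induction hT with
    | refl =>
      intro θ hθ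
      simp only [List.mem_singleton] at hθ
      subst hθ
      exact Nat.le_add_right _ _
    | tail _ hstep ih =>
      cases hstep with
      | egamma L R θ' τ i hψ hτ hnone hcompl =>
        intro θ hθ
        simp only [List.mem_append, List.mem_cons] at hθ
        rcases hθ with hθ | hθ | hθ
        · exact ih θ (by simp [hθ])
        · subst hθ
          have h1 := ih θ' (by simp)
          have h2 := sum_wgt_succ_le disj θ' _ τ
            (show τ ∈ Sfin from hfin.mem_toFinset.2 hτ)
            (wgt_lt_of_add_direct disj θ' τ i hnone)
          simp only [List.length_append, List.length_singleton]
          omega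
        · exact ih θ (by simp [hθ])
      | pb L R θ' τ h hψ hτ hnone hmiss hnoE =>
        intro θ hθ
        simp only [List.mem_append, List.mem_cons] at hθ
        rcases hθ with hθ | hθ | hθ | hθ
        · exact ih θ (by simp [hθ])
        · subst hθ
          have h1 := ih θ' (by simp)
          have h2 := sum_wgt_succ_le disj θ' _ τ
            (show τ ∈ Sfin from hfin.mem_toFinset.2 hτ)
            (wgt_lt_of_add_compl disj θ' τ h hnone hmiss hnoE)
          simp only [List.length_append, List.length_singleton]
          omega
        · subst hθ
          have h1 := ih θ' (by simp)
          have h2 := sum_wgt_succ_le disj θ' _ τ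
            (show τ ∈ Sfin from hfin.mem_toFinset.2 hτ)
            (wgt_lt_of_add_direct disj θ' τ h hnone)
          simp only [List.length_append, List.length_singleton]
          omega
        · exact ih θ (by simp [hθ])
  have hbound : (∑ σ ∈ Sfin, wgt disj θ σ) ≤ disj.length * V.card ^ qs.length := by
    calc (∑ σ ∈ Sfin, wgt disj θ σ) ≤ ∑ _σ ∈ Sfin, disj.length :=
          Finset.sum_le_sum (fun σ _ => wgt_le disj θ σ)
      _ = Sfin.card * disj.length := by rw [Finset.sum_const, smul_eq_mul]
      _ = disj.length * V.card ^ qs.length := by rw [hScard, Nat.mul_comm]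
  have := key T hT θ hθ
  omega
end

section
/- (Termination of the query-answering procedure.) The procedure HOCQA-DL^4(ψ_Q, E) terminates for every HO 4LQS^R_DL conjunctive query ψ_Q = q_1 ∧ … ∧ q_d and every finite set E of pairs (θ, σ_θ) of open fulfilled branches of T_KB with their equality-collapsing substitutions: for each pair, the stack-based exploration of the decision tree D_{θ'} on θ' = θσ_θ visits finitely many nodes, since each branch θ' contains finitely many literals, hence each node has finitely many successors (one per literal t on θ' with t = qρ for some substitution ρ, where q is the leftmost remaining conjunct), and the remaining query strictly shortens along each tree branch, so D_{θ'} has depth at most d+1; failing matches (empty successor set before the query is exhausted) abandon the branch. -/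
/-- The sort-0 variables occurring in a conjunctive query. -/
def queryVars0 (ψ : List Lit) : Finset ℕ := ψ.foldr (fun l s => Lit.vars0 l ∪ s) ∅

/-- The sort-1 variables occurring in a conjunctive query. -/
def queryVars1 (ψ : List Lit) : Finset ℕ := ψ.foldr (fun l s => Lit.vars1 l ∪ s) ∅

/-- The sort-3 variables occurring in a conjunctive query. -/
def queryVars3 (ψ : List Lit) : Finset ℕ := ψ.foldr (fun l s => Lit.vars3 l ∪ s) ∅

/-- `s` involves exactly (at most) the variables in `Q0`, `Q1`, `Q3`: it is the
identity outside of them. -/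
def Subst.SuppIn (s : Subst) (Q0 Q1 Q3 : Finset ℕ) : Prop :=
  (∀ x : ℕ, x ∉ Q0 → s.s0 x = x) ∧ (∀ X : ℕ, X ∉ Q1 → s.s1 X = X) ∧
  (∀ X : ℕ, X ∉ Q3 → s.s3 X = X)

/-- `s` maps the variables in `Q0`, `Q1`, `Q3` into `V0`, `V1`, `V3` respectively. -/
def Subst.MapsQInto (s : Subst) (Q0 Q1 Q3 V0 V1 V3 : Finset ℕ) : Prop :=
  (∀ x ∈ Q0, s.s0 x ∈ V0) ∧ (∀ X ∈ Q1, s.s1 X ∈ V1) ∧ (∀ X ∈ Q3, s.s3 X ∈ V3)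

/-- One expansion step of the stack-based exploration of the decision tree `D_θ'`
performed by procedure `HOCQA-DL⁴`: a node carries the accumulated substitution and
the remaining query; the leftmost remaining conjunct `q` is matched against a
literal `t` occurring on `θ'` via the (uniquely determined) substitution `ρ` of the
variables of `q` with `t = qρ`, producing one successor node per match. -/
inductive NodeStep (θ' : List Fm) : (Subst × List Lit) → (Subst × List Lit) → Prop
  | step (σ ρ : Subst) (q : Lit) (rest : List Lit)
      (hsupp : Subst.SuppIn ρ (Lit.vars0 q) (Lit.vars1 q) (Lit.vars3 q))
      (hmatch : Fm.lit (Lit.substF ρ q) ∈ θ') :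
      NodeStep θ' (σ, q :: rest) (Subst.comp σ ρ, rest.map (Lit.substF ρ))

lemma Subst.ext' {a b : Subst} (h0 : a.s0 = b.s0) (h1 : a.s1 = b.s1)
    (h3 : a.s3 = b.s3) : a = b := by
  cases a; cases b; simp_all

/-- Extracting the (uniquely determined) matching substitution from a pair of
literals. -/
def extract : Lit → Lit → Subst
  | .eq x y, .eq x' y' =>
      ⟨fun w => if w = x then x' else if w = y then y' else w, id, id⟩
  | .neq x y, .neq x' y' =>
      ⟨fun w => if w = x then x' else if w = y then y' else w, id, id⟩
  | .mem1 x X, .mem1 x' X' =>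
      ⟨fun w => if w = x then x' else w, fun W => if W = X then X' else W, id⟩
  | .nmem1 x X, .nmem1 x' X' =>
      ⟨fun w => if w = x then x' else w, fun W => if W = X then X' else W, id⟩
  | .mem3 x y X, .mem3 x' y' X' =>
      ⟨fun w => if w = x then x' else if w = y then y' else w, id,
        fun W => if W = X then X' else W⟩
  | .nmem3 x y X, .nmem3 x' y' X' =>
      ⟨fun w => if w = x then x' else if w = y then y' else w, id,
        fun W => if W = X then X' else W⟩
  | _, _ => Subst.idS

lemma extract_substF (q : Lit) (ρ : Subst)
    (h : ρ.SuppIn q.vars0 q.vars1 q.vars3) :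
    extract q (Lit.substF ρ q) = ρ := by
  obtain ⟨h0, h1, h3⟩ := h
  cases q <;>
    (apply Subst.ext' <;> funext w <;>
      simp only [extract, Lit.substF, Subst.idS, id] <;>
      (try split_ifs) <;>
      simp_all [Lit.vars0, Lit.vars1, Lit.vars3])

lemma succ_subset (θ' : List Fm) (σ : Subst) (q : Lit) (rest : List Lit) :
    {nd : Subst × List Lit | NodeStep θ' (σ, q :: rest) nd} ⊆
      (fun φ : Fm => match φ with
        | Fm.lit t =>
            (Subst.comp σ (extract q t), rest.map (Lit.substF (extract q t)))
        | _ => (σ, rest)) '' {φ | φ ∈ θ'} := by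
  rintro nd h
  cases h with
  | step σ ρ q rest hsupp hmatch =>
    exact ⟨Fm.lit (Lit.substF ρ q), hmatch, by simp [extract_substF q ρ hsupp]⟩

lemma succ_finite (θ' : List Fm) (σ : Subst) (q : Lit) (rest : List Lit) :
    {nd : Subst × List Lit | NodeStep θ' (σ, q :: rest) nd}.Finite :=
  ((θ'.finite_toSet).image _).subset (succ_subset θ' σ q rest)

lemma succ_ncard (θ' : List Fm) (σ : Subst) (q : Lit) (rest : List Lit) :
    {nd : Subst × List Lit | NodeStep θ' (σ, q :: rest) nd}.ncard ≤ θ'.length := by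
  calc {nd : Subst × List Lit | NodeStep θ' (σ, q :: rest) nd}.ncard
      ≤ ((fun φ : Fm => match φ with
        | Fm.lit t =>
            (Subst.comp σ (extract q t), rest.map (Lit.substF (extract q t)))
        | _ => (σ, rest)) '' {φ | φ ∈ θ'}).ncard :=
        Set.ncard_le_ncard (succ_subset θ' σ q rest) ((θ'.finite_toSet).image _)
    _ ≤ ({φ | φ ∈ θ'} : Set Fm).ncard := Set.ncard_image_le θ'.finite_toSet
    _ ≤ θ'.length := by
        rw [show ({φ | φ ∈ θ'} : Set Fm) = ↑θ'.toFinset by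
          simp [List.coe_toFinset], Set.ncard_coe_finset]
        exact θ'.toFinset_card_le

lemma step_len {θ' : List Fm} {a b : Subst × List Lit} (h : NodeStep θ' a b) :
    a.2.length = b.2.length + 1 := by
  cases h; simp

lemma succ_finite' (θ' : List Fm) (nd0 : Subst × List Lit) :
    {nd : Subst × List Lit | NodeStep θ' nd0 nd}.Finite := by
  obtain ⟨σ, l⟩ := nd0
  cases l with
  | nil =>
    apply Set.Finite.subset Set.finite_empty
    intro nd h
    cases h
  | cons q rest => exact succ_finite θ' σ q rest

lemma reach_finite (θ' : List Fm) :
    ∀ (n : ℕ) (nd0 : Subst × List Lit), nd0.2.length ≤ n →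
      {nd : Subst × List Lit |
        Relation.ReflTransGen (NodeStep θ') nd0 nd}.Finite := by
  intro n
  induction n with
  | zero =>
    intro nd0 h
    apply Set.Finite.subset (Set.finite_singleton nd0)
    intro nd hnd
    rcases Relation.ReflTransGen.cases_head hnd with rfl | ⟨c, hc, _⟩
    · exact Set.mem_singleton _
    · exfalso; have := step_len hc; omega
  | succ n ih =>
    intro nd0 h
    have hsub : {nd : Subst × List Lit |
        Relation.ReflTransGen (NodeStep θ') nd0 nd} ⊆
        insert nd0 (⋃ nd1 ∈ {nd : Subst × List Lit | NodeStep θ' nd0 nd},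
          {nd : Subst × List Lit | Relation.ReflTransGen (NodeStep θ') nd1 nd}) := by
      intro nd hnd
      rcases Relation.ReflTransGen.cases_head hnd with rfl | ⟨c, hc, hrest⟩
      · exact Set.mem_insert _ _
      · exact Set.mem_insert_of_mem _ (Set.mem_biUnion hc hrest)
    refine Set.Finite.subset (Set.Finite.insert _ ?_) hsub
    apply Set.Finite.biUnion (succ_finite' θ' nd0)
    intro nd1 h1
    apply ih
    have := step_len h1
    omega


/-- **Termination of the query-answering procedure.**
Procedure `HOCQA-DL⁴(ψ_Q, E)` terminates for every HO 4LQS^R_DL conjunctive query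
`ψ_Q = q₁ ∧ … ∧ q_d` and every finite set `E` of pairs `(θ, σ_θ)` of open fulfilled
branches of `T_KB` with their equality-collapsing substitutions: for each pair, on
the branch `θ' = θσ_θ`,
(i) each node of the decision tree `D_θ'` has finitely many successors — at most
one for each of the finitely many literals `t` occurring on `θ'` with `t = qρ` for
some substitution `ρ`, where `q` is the leftmost remaining conjunct — so at most
`θ'.length` many;
(ii) the remaining query strictly shortens along each branch of `D_θ'`, so every
chain of successor nodes starting from the root `(ε, ψ_Q σ_θ)` has length at most
`d`, i.e. `D_θ'` has depth at most `d + 1`; and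
(iii) consequently the stack-based exploration of `D_θ'` visits only finitely many
nodes (failing matches, having an empty successor set before the query is
exhausted, simply abandon the branch). -/
theorem hocqa_terminates (ψ : List Lit) (E : List (List Fm × (ℕ → ℕ))) :
    ∀ p ∈ E,
      (∀ (σ : Subst) (q : Lit) (rest : List Lit),
        {nd : Subst × List Lit |
            NodeStep (p.1.map (Fm.subst0 p.2)) (σ, q :: rest) nd}.Finite ∧
        {nd : Subst × List Lit |
            NodeStep (p.1.map (Fm.subst0 p.2)) (σ, q :: rest) nd}.ncard ≤
          (p.1.map (Fm.subst0 p.2)).length) ∧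
      (∀ (c : ℕ → Subst × List Lit) (j : ℕ),
        (c 0) = (Subst.idS, ψ.map (Lit.substF (Subst.lift0 p.2))) →
        (∀ i < j, NodeStep (p.1.map (Fm.subst0 p.2)) (c i) (c (i + 1))) →
        j ≤ ψ.length) ∧
      {nd : Subst × List Lit |
          Relation.ReflTransGen (NodeStep (p.1.map (Fm.subst0 p.2)))
            (Subst.idS, ψ.map (Lit.substF (Subst.lift0 p.2))) nd}.Finite := by
  intro p _
  refine ⟨fun σ q rest => ⟨succ_finite _ σ q rest, succ_ncard _ σ q rest⟩, ?_, ?_⟩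
  · intro c j h0 hsteps
    have key : ∀ i, i ≤ j → (c i).2.length + i = ψ.length := by
      intro i
      induction i with
      | zero => intro _; simp [h0]
      | succ i ih =>
        intro hij
        have h1 := ih (by omega)
        have h2 := step_len (hsteps i (by omega))
        omega
    have := key j le_rfl
    omega
  · exact reach_finite _ ψ.length _ (by simp)
end
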